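/- arXiv:0904.1148 — 2 statements merged into one kernel-verified Lean document; each statement's English description precedes it below -/
import Mathlib

section
/- Let θ' ∈ (0,1) satisfy (3(1−θ')²)/(2(2θ'+1)) · (√6 + 1/3) ≥ 4, let γ ≥ 1, set C' = (√6 + 1/3)γ. Let N be Poisson with mean m satisfying m ≤ θ' C' ln n, and assume (1−θ')(√6+1/3) ln n ≥ 2 and m ≤ n·F with F ≥ 0, m = nF. Then P(N − m ≥ (1−θ') C' ln n) ≤ F n^{−γ}. -/
/-!
Write `m = nF` and `t = (1 - θ')C' ln n ≥ 2`. If `m ≤ n^{-(γ+1)}`, the event forces `N ≥ 2`, and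
`P(N ≥ 2) ≤ m² ≤ m n^{-(γ+1)} = F n^{-γ}`. Otherwise the Chernoff bound with the Bernstein estimate
`e^λ - 1 - λ ≤ λ²/(2(1 - λ/3))`, at `λ = 3(1-θ')/(2θ'+1)`, bounds the probability by
`exp(-3(1-θ')²/(2(2θ'+1)) · C' ln n) ≤ n^{-4γ}`, and `n^{-4γ} ≤ n^{-(γ+2)} n^{-γ} < F n^{-γ}`
since now `F > n^{-(γ+2)}`.
-/

open MeasureTheory ProbabilityTheory Real
open scoped NNReal ENNReal Nat

lemma Real.exp_sub_one_sub_le_sq_div {x : ℝ} (hx0 : 0 ≤ x) (hx3 : x < 3) :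
    exp x - 1 - x ≤ x ^ 2 / (2 * (1 - x / 3)) := by
  -- the tail of the exponential series is dominated termwise by a geometric series: `(j+2)! ≥ 2·3^j`
  have htail : HasSum (fun j : ℕ ↦ x ^ (j + 2) / (j + 2)!) (exp x - 1 - x) := by
    have h := (hasSum_nat_add_iff' 2).mpr (NormedSpace.expSeries_div_hasSum_exp x)
    simpa [Finset.sum_range_succ, ← Real.exp_eq_exp_ℝ, sub_sub] using h
  have hgeom : HasSum (fun j : ℕ ↦ x ^ 2 / 2 * (x / 3) ^ j) (x ^ 2 / (2 * (1 - x / 3))) := by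
    rw [div_mul_eq_div_div, div_eq_mul_inv _ (1 - x / 3)]
    exact (hasSum_geometric_of_lt_one (by positivity) (by linarith)).mul_left (x ^ 2 / 2)
  refine hasSum_le (fun j ↦ ?_) htail hgeom
  have hfact : (2 * 3 ^ j : ℝ) ≤ (j + 2)! := by
    exact_mod_cast add_comm j 2 ▸ Nat.factorial_mul_pow_le_factorial (m := 2) (n := j)
  calc x ^ (j + 2) / (j + 2)! ≤ x ^ (j + 2) / (2 * 3 ^ j) := by gcongr
    _ = x ^ 2 / 2 * (x / 3) ^ j := by rw [div_pow]; field_simp; ring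

namespace ProbabilityTheory

lemma hasSum_poissonMeasure_exp_mul (r : ℝ≥0) (t : ℝ) :
    HasSum (fun n : ℕ ↦ exp (-r) * r ^ n / n ! * exp (t * n)) (exp (r * (exp t - 1))) := by
  have h := (NormedSpace.expSeries_div_hasSum_exp ((r : ℝ) * exp t)).mul_left (exp (-r))
  rw [← exp_eq_exp_ℝ, ← exp_add, neg_add_eq_sub, ← mul_sub_one] at h
  convert! h using 1
  ext n
  rw [mul_pow, ← exp_nat_mul, mul_comm t]
  ring

lemma integrable_exp_mul_poissonMeasure (r : ℝ≥0) (t : ℝ) :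
    Integrable (fun n : ℕ ↦ exp (t * n)) (poissonMeasure r) := by
  rw [integrable_poissonMeasure_iff]
  simpa only [Real.norm_eq_abs, abs_exp] using (hasSum_poissonMeasure_exp_mul r t).summable

lemma mgf_poissonMeasure (r : ℝ≥0) (t : ℝ) :
    mgf (fun n : ℕ ↦ (n : ℝ)) (poissonMeasure r) t = exp (r * (exp t - 1)) := by
  rw [mgf, integral_poissonMeasure]
  simpa only [smul_eq_mul] using (hasSum_poissonMeasure_exp_mul r t).tsum_eq

lemma poissonMeasure_real_ge_le_exp (r : ℝ≥0) (a : ℝ) {t : ℝ} (ht : 0 ≤ t) :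
    (poissonMeasure r).real {n | a ≤ (n : ℝ)} ≤ exp (r * (exp t - 1) - t * a) := by
  have h := measure_ge_le_exp_mul_mgf a ht (integrable_exp_mul_poissonMeasure r t)
  rwa [mgf_poissonMeasure, ← exp_add, neg_mul, neg_add_eq_sub] at h

lemma poissonMeasure_real_two_le_le_sq (r : ℝ≥0) :
    (poissonMeasure r).real {n | 2 ≤ n} ≤ r ^ 2 := by
  have hc : {n : ℕ | 2 ≤ n} = ({0} ∪ {1} : Set ℕ)ᶜ := by ext n; simp; omega
  rw [hc, probReal_compl_eq_one_sub .of_discrete, measureReal_union (by simp) .of_discrete,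
    poissonMeasure_real_singleton, poissonMeasure_real_singleton]
  have := add_one_le_exp (-(r : ℝ))
  nlinarith [r.coe_nonneg]

lemma poissonMeasure_real_sub_ge_le_exp (r : ℝ≥0) (s : ℝ) {l : ℝ} (hl0 : 0 ≤ l) (hl3 : l < 3) :
    (poissonMeasure r).real {n | s ≤ (n : ℝ) - r} ≤
      exp (r * (l ^ 2 / (2 * (1 - l / 3))) - l * s) := by
  have hset : {n : ℕ | s ≤ (n : ℝ) - r} = {n : ℕ | r + s ≤ (n : ℝ)} := by
    ext n
    simp only [Set.mem_ofPred_eq, le_sub_iff_add_le']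
  rw [hset]
  refine (poissonMeasure_real_ge_le_exp r _ hl0).trans (exp_le_exp.mpr ?_)
  have := mul_le_mul_of_nonneg_left (exp_sub_one_sub_le_sq_div hl0 hl3) r.coe_nonneg
  linarith

lemma poissonMeasure_real_sub_ge_le (r : ℝ≥0) {θ c : ℝ} (hθ0 : 0 < θ) (hθ1 : θ < 1)
    (hr : r ≤ θ * c) :
    (poissonMeasure r).real {n | (1 - θ) * c ≤ (n : ℝ) - r} ≤
      exp (-(3 * (1 - θ) ^ 2 / (2 * (2 * θ + 1)) * c)) := by
  -- at `l = 3(1-θ)/(2θ+1)` and `r ≤ θc`, the quadratic term is at most half of `l (1-θ) c`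
  have hl0 : 0 ≤ 3 * (1 - θ) / (2 * θ + 1) := div_nonneg (by linarith) (by linarith)
  have hl3 : 3 * (1 - θ) / (2 * θ + 1) < 3 := by rw [div_lt_iff₀ (by linarith)]; linarith
  refine (poissonMeasure_real_sub_ge_le_exp r _ hl0 hl3).trans (exp_le_exp.mpr ?_)
  have hq : (3 * (1 - θ) / (2 * θ + 1)) ^ 2 / (2 * (1 - 3 * (1 - θ) / (2 * θ + 1) / 3)) =
      3 * (1 - θ) ^ 2 / (2 * θ * (2 * θ + 1)) := by
    have hθ : θ ≠ 0 := hθ0.ne'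
    have hden : 1 - 3 * (1 - θ) / (2 * θ + 1) / 3 = 3 * θ / (2 * θ + 1) := by
      field_simp
      ring
    rw [hden]
    field_simp
  have hmean := mul_le_mul_of_nonneg_right hr
    (show 0 ≤ 3 * (1 - θ) ^ 2 / (2 * θ * (2 * θ + 1)) by positivity)
  rw [hq]
  have h1 : θ * c * (3 * (1 - θ) ^ 2 / (2 * θ * (2 * θ + 1))) =
      3 * (1 - θ) ^ 2 / (2 * (2 * θ + 1)) * c := by
    field_simp
  have h2 : 3 * (1 - θ) / (2 * θ + 1) * ((1 - θ) * c) =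
      2 * (3 * (1 - θ) ^ 2 / (2 * (2 * θ + 1)) * c) := by
    field_simp
  linarith

end ProbabilityTheory

lemma sq_le_mul_rpow_neg {x F γ : ℝ} (hx : 0 < x) (hF : 0 ≤ F) (h : x * F ≤ x ^ (-(γ + 1))) :
    (x * F) ^ 2 ≤ F * x ^ (-γ) := by
  have hx' : x ^ (-γ) = x ^ (-(γ + 1)) * x := by
    rw [← rpow_add_one hx.ne']; ring_nf
  rw [hx', sq]
  calc x * F * (x * F) ≤ x * F * x ^ (-(γ + 1)) := by gcongr
    _ = F * (x ^ (-(γ + 1)) * x) := by ring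

lemma rpow_neg_four_mul_le {x F γ : ℝ} (hx : 1 < x) (hγ : 1 ≤ γ) (h : x ^ (-(γ + 1)) < x * F) :
    x ^ (-(4 * γ)) ≤ F * x ^ (-γ) := by
  have hx0 : 0 < x := by linarith
  have hF : x ^ (-(γ + 2)) ≤ F := by
    rw [show -(γ + 1) = -(γ + 2) + 1 by ring, rpow_add_one hx0.ne'] at h
    exact (lt_of_mul_lt_mul_right (by rwa [mul_comm x F] at h) hx0.le).le
  calc x ^ (-(4 * γ)) ≤ x ^ (-(γ + 2) + -γ) := rpow_le_rpow_of_exponent_le hx.le (by linarith)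
    _ = x ^ (-(γ + 2)) * x ^ (-γ) := rpow_add hx0 _ _
    _ ≤ F * x ^ (-γ) := by gcongr

/-- Lemma `nombredepoints`: if `N ~ Poisson(nF)` with `nF ≤ θ'C' ln n`,
`C' = (√6 + 1/3)γ`, `γ ≥ 1`, `θ' ∈ (0,1)` with `3(1−θ')²/(2(2θ'+1))·(√6+1/3) ≥ 4`,
and `(1−θ')(√6+1/3) ln n ≥ 2`, then `P(N − nF ≥ (1−θ')C' ln n) ≤ F n^{−γ}`. -/
theorem stmt5 {Ω : Type*} [MeasurableSpace Ω] (P : Measure Ω) [IsProbabilityMeasure P]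
    (N : Ω → ℕ) (hNm : Measurable N)
    (n : ℕ) (hn : 3 ≤ n) (F : ℝ≥0) (γ θ' C' : ℝ)
    (hγ : 1 ≤ γ) (hC : C' = (Real.sqrt 6 + 1 / 3) * γ)
    (hθ0 : 0 < θ') (hθ1 : θ' < 1)
    (hθ : 4 ≤ 3 * (1 - θ') ^ 2 / (2 * (2 * θ' + 1)) * (Real.sqrt 6 + 1 / 3))
    (hd : Measure.map N P = poissonMeasure ((n : ℝ≥0) * F))
    (hmean : (n : ℝ) * (F : ℝ) ≤ θ' * C' * Real.log n)
    (hln : 2 ≤ (1 - θ') * (Real.sqrt 6 + 1 / 3) * Real.log n) :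
    P {ω | (1 - θ') * C' * Real.log n ≤ (N ω : ℝ) - (n : ℝ) * (F : ℝ)}
      ≤ ENNReal.ofReal ((F : ℝ) * (n : ℝ) ^ (-γ)) := by
  set r : ℝ≥0 := (n : ℝ≥0) * F
  have hr : (r : ℝ) = n * F := by simp [r]
  have hn1 : (1 : ℝ) < n := by exact_mod_cast (by omega : 1 < n)
  have hlog : 0 < log n := log_pos hn1
  rw [← hr] at hmean ⊢
  have hlaw : P {ω | (1 - θ') * C' * log n ≤ (N ω : ℝ) - r} =
      poissonMeasure r {k | (1 - θ') * C' * log n ≤ (k : ℝ) - r} := by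
    rw [← hd, Measure.map_apply hNm .of_discrete]
    rfl
  rw [hlaw, ← ofReal_measureReal]
  refine ENNReal.ofReal_le_ofReal ?_
  rcases le_or_gt (r : ℝ) ((n : ℝ) ^ (-(γ + 1))) with hsmall | hlarge
  · have ht : 2 ≤ (1 - θ') * C' * log n := by rw [hC]; nlinarith
    have hsub : {k : ℕ | (1 - θ') * C' * log n ≤ (k : ℝ) - r} ⊆ {k | 2 ≤ k} := by
      intro k (hk : _ ≤ (k : ℝ) - r)
      have : (2 : ℝ) ≤ k := by linarith [r.coe_nonneg]
      exact_mod_cast this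
    rw [hr] at hsmall
    calc _ ≤ (poissonMeasure r).real {k | 2 ≤ k} := measureReal_mono hsub
      _ ≤ r ^ 2 := poissonMeasure_real_two_le_le_sq r
      _ ≤ F * n ^ (-γ) := hr ▸ sq_le_mul_rpow_neg (by linarith) F.coe_nonneg hsmall
  · rw [hr] at hlarge
    calc _ ≤ exp (-(3 * (1 - θ') ^ 2 / (2 * (2 * θ' + 1)) * (C' * log n))) := by
          simpa only [mul_assoc] using poissonMeasure_real_sub_ge_le r hθ0 hθ1 (by linarith)
      _ ≤ exp (log n * -(4 * γ)) := by
          have := mul_le_mul_of_nonneg_right hθ (mul_nonneg (by linarith : 0 ≤ γ) hlog.le)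
          rw [exp_le_exp, hC]
          linarith
      _ = n ^ (-(4 * γ)) := (rpow_def_of_pos (by linarith) _).symm
      _ ≤ F * n ^ (-γ) := rpow_neg_four_mul_le hn1 hγ hlarge
end

section
/- For every ε > 0 there exists w_ε = √(ε^{−1} + 6) + 1/3 such that for all nonnegative reals V̂, b and u: √(2γ u (V̂ + √(2γ u V̂ b²) + 3γ u b²)) + (γ u /3) b ≤ √(2γ(1+ε) u V̂) + γ u b w_ε, where γ > 0. -/
open Real

lemma sqrt_add_le' (x y : ℝ) (hx : 0 ≤ x) (hy : 0 ≤ y) :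
    Real.sqrt (x + y) ≤ Real.sqrt x + Real.sqrt y := by
  have h := Real.sqrt_le_sqrt (show x + y ≤ (Real.sqrt x + Real.sqrt y) ^ 2 by
    nlinarith [Real.sq_sqrt hx, Real.sq_sqrt hy, Real.sqrt_nonneg x, Real.sqrt_nonneg y])
  rwa [Real.sqrt_sq (by positivity)] at h

/-- Deterministic bound on the data-driven threshold: with `w_ε = √(ε⁻¹+6) + 1/3`,
`√(2γu(V̂ + √(2γuV̂b²) + 3γub²)) + (γu/3)b ≤ √(2γ(1+ε)uV̂) + γub·w_ε`. -/
theorem stmt10 (ε : ℝ) (hε : 0 < ε) (γ : ℝ) (hγ : 0 < γ)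
    (V b u : ℝ) (hV : 0 ≤ V) (hb : 0 ≤ b) (hu : 0 ≤ u) :
    Real.sqrt (2 * γ * u * (V + Real.sqrt (2 * γ * u * V * b ^ 2) + 3 * γ * u * b ^ 2))
        + (γ * u / 3) * b
      ≤ Real.sqrt (2 * γ * (1 + ε) * u * V)
        + γ * u * b * (Real.sqrt (ε⁻¹ + 6) + 1 / 3) := by
  set s := Real.sqrt (2 * γ * u * V) with hs
  have hsnn : 0 ≤ s := Real.sqrt_nonneg _
  have hs2 : s ^ 2 = 2 * γ * u * V := Real.sq_sqrt (by positivity)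
  have hsqb : Real.sqrt (2 * γ * u * V * b ^ 2) = s * b := by
    rw [Real.sqrt_mul (by positivity), Real.sqrt_sq hb]
  -- key quadratic bound
  have h1 : 2 * γ * u * (V + Real.sqrt (2 * γ * u * V * b ^ 2) + 3 * γ * u * b ^ 2)
      ≤ (1 + ε) * (2 * γ * u * V) + (ε⁻¹ + 6) * (γ * u * b) ^ 2 := by
    rw [hsqb]
    have h2 : 2 * (s * (γ * u * b)) ≤ ε * s ^ 2 + ε⁻¹ * (γ * u * b) ^ 2 := by
      have := sq_nonneg (Real.sqrt ε * s - Real.sqrt ε⁻¹ * (γ * u * b))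
      have e1 : Real.sqrt ε ^ 2 = ε := Real.sq_sqrt hε.le
      have e2 : Real.sqrt ε⁻¹ ^ 2 = ε⁻¹ := Real.sq_sqrt (by positivity)
      have e3 : Real.sqrt ε * Real.sqrt ε⁻¹ = 1 := by
        rw [← Real.sqrt_mul hε.le, mul_inv_cancel₀ hε.ne', Real.sqrt_one]
      have e4 : Real.sqrt ε * s * (Real.sqrt ε⁻¹ * (γ * u * b)) = s * (γ * u * b) := by
        rw [show Real.sqrt ε * s * (Real.sqrt ε⁻¹ * (γ * u * b))
          = (Real.sqrt ε * Real.sqrt ε⁻¹) * (s * (γ * u * b)) by ring, e3, one_mul]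
      nlinarith [this, e1, e2, e4]
    nlinarith
  calc Real.sqrt (2 * γ * u * (V + Real.sqrt (2 * γ * u * V * b ^ 2) + 3 * γ * u * b ^ 2))
        + (γ * u / 3) * b
      ≤ Real.sqrt ((1 + ε) * (2 * γ * u * V) + (ε⁻¹ + 6) * (γ * u * b) ^ 2)
        + (γ * u / 3) * b := by
        gcongr
    _ ≤ Real.sqrt ((1 + ε) * (2 * γ * u * V)) + Real.sqrt ((ε⁻¹ + 6) * (γ * u * b) ^ 2)
        + (γ * u / 3) * b := by
        have := sqrt_add_le' ((1 + ε) * (2 * γ * u * V)) ((ε⁻¹ + 6) * (γ * u * b) ^ 2)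
          (by positivity) (by positivity)
        linarith
    _ = Real.sqrt (2 * γ * (1 + ε) * u * V)
        + γ * u * b * (Real.sqrt (ε⁻¹ + 6) + 1 / 3) := by
        rw [show (1 + ε) * (2 * γ * u * V) = 2 * γ * (1 + ε) * u * V by ring,
          Real.sqrt_mul (by positivity) ((γ * u * b) ^ 2), Real.sqrt_sq (by positivity)]
        ring
end
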